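/- arXiv:2403.00733 — 3 statements merged into one kernel-verified Lean document; each statement's English description precedes it below -/
import Mathlib

section
/- Suppose ψ : ℝ^m → ℝ is convex and Lipschitz with constant L, G : ℝ^n → ℝ^m is C¹ with G and its derivative ∇G Lipschitz on a compact set K, z̄ ∈ K satisfies ψ(G(z̄) + DG(z̄) d) ≥ ψ(G(z̄)) + γ‖d‖ for all d ∈ ℝ^n with γ > 0, and ε > 0. Then there exists η > 0 such that for every z ∈ K with ‖z - z̄‖ < η, one has ψ(G(z) + DG(z) d) - ψ(G(z)) ≥ (γ/2)ε for all d with ‖d‖ = ε. -/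
open NNReal

theorem stmt_5 {n m : ℕ} (ψ : EuclideanSpace ℝ (Fin m) → ℝ)
    (hψconv : ConvexOn ℝ Set.univ ψ) (L : ℝ≥0) (hψ : LipschitzWith L ψ)
    (G : EuclideanSpace ℝ (Fin n) → EuclideanSpace ℝ (Fin m))
    (hG : ContDiff ℝ 1 G)
    (K : Set (EuclideanSpace ℝ (Fin n))) (hK : IsCompact K)
    (LG LDG : ℝ≥0) (hGLip : LipschitzOnWith LG G K)
    (hDGLip : ∀ z ∈ K, ∀ w ∈ K, ‖fderiv ℝ G z - fderiv ℝ G w‖ ≤ (LDG : ℝ) * ‖z - w‖)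
    (zbar : EuclideanSpace ℝ (Fin n)) (hzbar : zbar ∈ K)
    (γ : ℝ) (hγ : 0 < γ)
    (hgrowth : ∀ d : EuclideanSpace ℝ (Fin n),
      ψ (G zbar + fderiv ℝ G zbar d) ≥ ψ (G zbar) + γ * ‖d‖)
    (ε : ℝ) (hε : 0 < ε) :
    ∃ η > 0, ∀ z ∈ K, ‖z - zbar‖ < η → ∀ d : EuclideanSpace ℝ (Fin n), ‖d‖ = ε →
      ψ (G z + fderiv ℝ G z d) - ψ (G z) ≥ (γ / 2) * ε := by
  set C : ℝ := (L : ℝ) * (2 * (LG : ℝ) + (LDG : ℝ) * ε) + 1 with hCdef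
  have hC0 : 0 < C := by positivity
  refine ⟨γ * ε / (2 * C), by positivity, ?_⟩
  intro z hz hzη d hd
  have hψd : ∀ a b, ψ a - ψ b ≤ (L : ℝ) * ‖a - b‖ := by
    intro a b
    have h := hψ.dist_le_mul a b
    rw [Real.dist_eq, dist_eq_norm] at h
    linarith [le_abs_self (ψ a - ψ b)]
  have h1 : ‖G z - G zbar‖ ≤ (LG : ℝ) * ‖z - zbar‖ := by
    have := hGLip.dist_le_mul z hz zbar hzbar
    simpa [dist_eq_norm] using this
  have h2 : ‖(fderiv ℝ G z - fderiv ℝ G zbar) d‖ ≤ (LDG : ℝ) * ‖z - zbar‖ * ε := by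
    calc ‖(fderiv ℝ G z - fderiv ℝ G zbar) d‖
        ≤ ‖fderiv ℝ G z - fderiv ℝ G zbar‖ * ‖d‖ :=
          (fderiv ℝ G z - fderiv ℝ G zbar).le_opNorm d
      _ ≤ (LDG : ℝ) * ‖z - zbar‖ * ε := by
          rw [hd]
          exact mul_le_mul_of_nonneg_right (hDGLip z hz zbar hzbar) hε.le
  have hnorm : ‖(G zbar + fderiv ℝ G zbar d) - (G z + fderiv ℝ G z d)‖
      ≤ (LG : ℝ) * ‖z - zbar‖ + (LDG : ℝ) * ‖z - zbar‖ * ε := by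
    have heq : (G zbar + fderiv ℝ G zbar d) - (G z + fderiv ℝ G z d)
        = -((G z - G zbar) + (fderiv ℝ G z - fderiv ℝ G zbar) d) := by
      simp [ContinuousLinearMap.sub_apply]
      abel
    rw [heq, norm_neg]
    exact (norm_add_le _ _).trans (add_le_add h1 h2)
  have hA : ψ (G zbar + fderiv ℝ G zbar d) - ψ (G z + fderiv ℝ G z d)
      ≤ (L : ℝ) * ((LG : ℝ) * ‖z - zbar‖ + (LDG : ℝ) * ‖z - zbar‖ * ε) :=
    (hψd _ _).trans (mul_le_mul_of_nonneg_left hnorm L.coe_nonneg)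
  have hB : ψ (G z) - ψ (G zbar) ≤ (L : ℝ) * ((LG : ℝ) * ‖z - zbar‖) := by
    refine (hψd _ _).trans (mul_le_mul_of_nonneg_left ?_ L.coe_nonneg)
    simpa [dist_eq_norm] using hGLip.dist_le_mul z hz zbar hzbar
  have hgr : ψ (G zbar + fderiv ℝ G zbar d) ≥ ψ (G zbar) + γ * ε := by
    have := hgrowth d
    rwa [hd] at this
  have hdn : (0:ℝ) ≤ ‖z - zbar‖ := norm_nonneg _
  have hkey : (L : ℝ) * (2 * (LG : ℝ) + (LDG : ℝ) * ε) * ‖z - zbar‖ < γ * ε / 2 := by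
    have hle : (L : ℝ) * (2 * (LG : ℝ) + (LDG : ℝ) * ε) * ‖z - zbar‖ ≤ C * ‖z - zbar‖ := by
      apply mul_le_mul_of_nonneg_right _ hdn
      simp [hCdef]
    have hlt : C * ‖z - zbar‖ < C * (γ * ε / (2 * C)) :=
      mul_lt_mul_of_pos_left hzη hC0
    have heq : C * (γ * ε / (2 * C)) = γ * ε / 2 := by
      field_simp
    linarith
  nlinarith [hA, hB, hgr, hkey]
end

section
/- (Small-step theorem.) Under the hypotheses: ψ convex and Lipschitz, G C¹ with G and DG Lipschitz on a compact set containing the iterates, and z̄ satisfying ψ(G(z̄) + DG(z̄) d) ≥ ψ(G(z̄)) + γ‖d‖ for all d with γ > 0; for every ε > 0 there exists η > 0 such that whenever ‖z - z̄‖ < η, any minimizer d* of the function d ↦ ψ(G(z) + DG(z) d) over any closed ball {‖d‖ ≤ r} (r > 0 arbitrary) satisfies ‖d*‖ ≤ ε. -/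
open NNReal


private lemma stmt_6_arith (a b γ ε s t : ℝ) (ha : 0 ≤ a) (hb : 0 ≤ b)
    (hγ : 0 < γ) (hε : 0 < ε) (hs0 : 0 ≤ s) (ht0 : 0 ≤ t)
    (hs1 : s < γ / (2 * (b + 1))) (hs2 : s < γ * ε / (4 * (a + 1)))
    (key : γ * t ≤ 2 * a * s + b * (s * t)) : t ≤ ε := by
  have hb1 : (0:ℝ) < b + 1 := by linarith
  have ha1 : (0:ℝ) < a + 1 := by linarith
  rw [lt_div_iff₀ (by positivity : (0:ℝ) < 2 * (b + 1))] at hs1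
  rw [lt_div_iff₀ (by positivity : (0:ℝ) < 4 * (a + 1))] at hs2
  have h1 : (b + 1) * s < γ / 2 := by linarith
  have h2 : 2 * (a + 1) * s < γ * ε / 2 := by linarith
  have hst : 0 ≤ s * t := mul_nonneg hs0 ht0
  have h3 : b * (s * t) ≤ (γ / 2) * t := by
    have e1 : b * (s * t) ≤ (b + 1) * s * t := by nlinarith
    have e2 : (b + 1) * s * t ≤ (γ / 2) * t :=
      mul_le_mul_of_nonneg_right (le_of_lt h1) ht0
    linarith
  have h4 : 2 * a * s ≤ 2 * (a + 1) * s := by nlinarith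
  have hγt : γ * t ≤ γ * ε := by linarith
  exact le_of_mul_le_mul_left hγt hγ

theorem stmt_6 {n m : ℕ} (ψ : EuclideanSpace ℝ (Fin m) → ℝ)
    (hψconv : ConvexOn ℝ Set.univ ψ) (L : ℝ≥0) (hψ : LipschitzWith L ψ)
    (G : EuclideanSpace ℝ (Fin n) → EuclideanSpace ℝ (Fin m))
    (hG : ContDiff ℝ 1 G)
    (K : Set (EuclideanSpace ℝ (Fin n))) (hK : IsCompact K)
    (LG LDG : ℝ≥0) (hGLip : LipschitzOnWith LG G K)
    (hDGLip : ∀ z ∈ K, ∀ w ∈ K, ‖fderiv ℝ G z - fderiv ℝ G w‖ ≤ (LDG : ℝ) * ‖z - w‖)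
    (zbar : EuclideanSpace ℝ (Fin n)) (hzbar : zbar ∈ K)
    (γ : ℝ) (hγ : 0 < γ)
    (hgrowth : ∀ d : EuclideanSpace ℝ (Fin n),
      ψ (G zbar + fderiv ℝ G zbar d) ≥ ψ (G zbar) + γ * ‖d‖) :
    ∀ ε > 0, ∃ η > 0, ∀ z ∈ K, ‖z - zbar‖ < η → ∀ r > 0,
      ∀ dstar : EuclideanSpace ℝ (Fin n), ‖dstar‖ ≤ r →
      (∀ d : EuclideanSpace ℝ (Fin n), ‖d‖ ≤ r →
        ψ (G z + fderiv ℝ G z dstar) ≤ ψ (G z + fderiv ℝ G z d)) →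
      ‖dstar‖ ≤ ε := by
  intro ε hε
  refine ⟨min (γ / (2 * ((L : ℝ) * (LDG : ℝ) + 1))) (γ * ε / (4 * ((L : ℝ) * (LG : ℝ) + 1))), by positivity, ?_⟩
  intro z hz hηz r hr dstar hds hmin
  -- Lipschitz estimate for ψ
  have lip : ∀ a b : EuclideanSpace ℝ (Fin m), ψ a - ψ b ≤ (L : ℝ) * ‖a - b‖ := by
    intro a b
    have h := hψ.dist_le_mul a b
    rw [dist_eq_norm] at h
    calc ψ a - ψ b ≤ |ψ a - ψ b| := le_abs_self _
      _ = dist (ψ a) (ψ b) := (Real.dist_eq _ _).symm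
      _ ≤ (L : ℝ) * ‖a - b‖ := h
  set s : ℝ := ‖z - zbar‖ with hsdef
  set t : ℝ := ‖dstar‖ with htdef
  have hs0 : 0 ≤ s := norm_nonneg _
  have ht0 : 0 ≤ t := norm_nonneg _
  have hs1 : s < γ / (2 * ((L : ℝ) * (LDG : ℝ) + 1)) := lt_of_lt_of_le hηz (min_le_left _ _)
  have hs2 : s < γ * ε / (4 * ((L : ℝ) * (LG : ℝ) + 1)) := lt_of_lt_of_le hηz (min_le_right _ _)
  -- basic Lipschitz bounds
  have hgz : ‖G z - G zbar‖ ≤ (LG : ℝ) * s := by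
    have := hGLip.dist_le_mul z hz zbar hzbar
    rwa [dist_eq_norm, dist_eq_norm] at this
  have hdg : ‖fderiv ℝ G z - fderiv ℝ G zbar‖ ≤ (LDG : ℝ) * s :=
    hDGLip z hz zbar hzbar
  set A := fderiv ℝ G z with hAdef
  set B := fderiv ℝ G zbar with hBdef
  -- minimality against d = 0
  have h0 : ψ (G z + A dstar) ≤ ψ (G z) := by
    have := hmin 0 (by simp [le_of_lt hr])
    simpa using this
  -- norm of the perturbation
  have hpert : ‖(G zbar + B dstar) - (G z + A dstar)‖ ≤ (LG : ℝ) * s + (LDG : ℝ) * s * t := by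
    have heq : (G zbar + B dstar) - (G z + A dstar) = (G zbar - G z) + (B - A) dstar := by
      simp [ContinuousLinearMap.sub_apply]
      abel
    rw [heq]
    refine le_trans (norm_add_le _ _) (add_le_add ?_ ?_)
    · rw [norm_sub_rev]; exact hgz
    · calc ‖(B - A) dstar‖ ≤ ‖B - A‖ * t := (B - A).le_opNorm dstar
        _ ≤ ((LDG : ℝ) * s) * t := by
            have : ‖B - A‖ ≤ (LDG : ℝ) * s := by rw [norm_sub_rev]; exact hdg
            exact mul_le_mul_of_nonneg_right this ht0
        _ = (LDG : ℝ) * s * t := by ring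
  -- main chain of inequalities
  have key : γ * t ≤ 2 * ((L : ℝ) * (LG : ℝ)) * s + ((L : ℝ) * (LDG : ℝ)) * (s * t) := by
    have h1 : ψ (G zbar) + γ * t ≤ ψ (G zbar + B dstar) := hgrowth dstar
    have h2 : ψ (G zbar + B dstar) - ψ (G z + A dstar)
        ≤ (L : ℝ) * ((LG : ℝ) * s + (LDG : ℝ) * s * t) := by
      refine le_trans (lip _ _) ?_
      exact mul_le_mul_of_nonneg_left hpert (by positivity)
    have h3 : ψ (G z) - ψ (G zbar) ≤ (L : ℝ) * ((LG : ℝ) * s) := by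
      refine le_trans (lip _ _) ?_
      exact mul_le_mul_of_nonneg_left hgz (by positivity)
    linarith [h0, h1, h2, h3]
  exact stmt_6_arith ((L : ℝ) * (LG : ℝ)) ((L : ℝ) * (LDG : ℝ)) γ ε s t
    (by positivity) (by positivity) hγ hε hs0 ht0 hs1 hs2 key
end

section
/- (Strong convergence via local error bound.) Let J : ℝ^n → ℝ be continuous, (z^k) a sequence with J(z^{k+1}) ≤ J(z^k), and z̄ an accumulation point of (z^k). Suppose: (i) there exist γ > 0, δ > 0 with J(z) - J(z̄) ≥ γ‖z - z̄‖ for all z with ‖z - z̄‖ ≤ δ; (ii) for every ε > 0 there exists η > 0 such that ‖z^k - z̄‖ < η implies ‖z^{k+1} - z^k‖ < ε. Then z^k → z̄. -/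
theorem stmt_8 {n : ℕ} (J : EuclideanSpace ℝ (Fin n) → ℝ) (hJ : Continuous J)
    (z : ℕ → EuclideanSpace ℝ (Fin n)) (hdec : ∀ k, J (z (k + 1)) ≤ J (z k))
    (zbar : EuclideanSpace ℝ (Fin n))
    (hcluster : ∃ φ : ℕ → ℕ, StrictMono φ ∧
      Filter.Tendsto (fun k => z (φ k)) Filter.atTop (nhds zbar))
    (γ δ : ℝ) (hγ : 0 < γ) (hδ : 0 < δ)
    (hgrowth : ∀ x : EuclideanSpace ℝ (Fin n), ‖x - zbar‖ ≤ δ →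
      J x - J zbar ≥ γ * ‖x - zbar‖)
    (hsmall : ∀ ε > 0, ∃ η > 0, ∀ k, ‖z k - zbar‖ < η → ‖z (k + 1) - z k‖ < ε) :
    Filter.Tendsto z Filter.atTop (nhds zbar) := by
  obtain ⟨φ, hφ, hconv⟩ := hcluster
  have hJconv : Filter.Tendsto (fun k => J (z (φ k))) Filter.atTop (nhds (J zbar)) :=
    (hJ.tendsto zbar).comp hconv
  have hmono : ∀ k m, k ≤ m → J (z m) ≤ J (z k) := by
    intro k m hkm
    induction m with
    | zero => simp_all
    | succ m ih =>
      rcases Nat.lt_or_ge k (m + 1) with h | h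
      · exact (hdec m).trans (ih (Nat.lt_succ_iff.mp h))
      · have : k = m + 1 := le_antisymm hkm h
        simp [this]
  rw [NormedAddCommGroup.tendsto_atTop]
  intro ε₀ hε₀
  set ε₁ := min ε₀ (δ / 2) with hε₁def
  have hε₁ : 0 < ε₁ := lt_min hε₀ (by linarith)
  have hε₁δ : ε₁ ≤ δ / 2 := min_le_right _ _
  obtain ⟨η, hη, hstep⟩ := hsmall (δ - ε₁) (by linarith)
  set ε := min ε₁ η with hεdef
  have hε : 0 < ε := lt_min hε₁ hη
  have hεε₁ : ε ≤ ε₁ := min_le_left _ _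
  -- find k0 = φ m with both norm small and J close
  have h1 : ∀ᶠ m in Filter.atTop, ‖z (φ m) - zbar‖ < ε := by
    obtain ⟨N, hN⟩ := (NormedAddCommGroup.tendsto_atTop.mp hconv) ε hε
    exact Filter.eventually_atTop.mpr ⟨N, hN⟩
  have h2 : ∀ᶠ m in Filter.atTop, J (z (φ m)) < J zbar + γ * ε := by
    have := hJconv.eventually (eventually_lt_nhds (by nlinarith : J zbar < J zbar + γ * ε))
    exact this
  obtain ⟨m, hm1, hm2⟩ := (h1.and h2).exists
  set k0 := φ m with hk0
  have key : ∀ k, k0 ≤ k → ‖z k - zbar‖ < ε := by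
    intro k hk
    induction k with
    | zero =>
      have : k0 = 0 := Nat.le_zero.mp hk
      rw [← this]; exact hm1
    | succ k ih =>
      rcases Nat.lt_or_ge k0 (k + 1) with h | h
      · have hik : ‖z k - zbar‖ < ε := ih (Nat.lt_succ_iff.mp h)
        have hs : ‖z (k + 1) - z k‖ < δ - ε₁ :=
          hstep k (lt_of_lt_of_le hik (min_le_right _ _))
        have htri : ‖z (k + 1) - zbar‖ ≤ ‖z (k + 1) - z k‖ + ‖z k - zbar‖ :=
          norm_sub_le_norm_sub_add_norm_sub _ _ _
        have hδb : ‖z (k + 1) - zbar‖ ≤ δ := by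
          have : ε ≤ δ / 2 := hεε₁.trans hε₁δ
          linarith
        have hg := hgrowth (z (k + 1)) hδb
        have hJk : J (z (k + 1)) ≤ J (z k0) := hmono k0 (k + 1) (Nat.lt_succ_iff.mp h |>.step)
        have hlt : γ * ‖z (k + 1) - zbar‖ < γ * ε := by
          have : γ * ‖z (k + 1) - zbar‖ ≤ J (z (k + 1)) - J zbar := hg
          rw [hk0] at hJk
          linarith
        exact lt_of_mul_lt_mul_left hlt hγ.le
      · have : k0 = k + 1 := le_antisymm hk h
        rw [← this]; exact hm1
  exact ⟨k0, fun k hk => lt_of_lt_of_le (key k hk) (hεε₁.trans (min_le_left _ _))⟩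
end
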